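/- arXiv:1211.3197 — 5 statements merged into one kernel-verified Lean document; each statement's English description precedes it below -/
import Mathlib

section
/- Let A be a Cartan matrix and let f = Σ_{i,j=1}^n λ_{ij} ω_i ω_j with rational coefficients satisfying λ_{ij} = λ_{ji}. Then f is W(A)-invariant if and only if 2λ_{ij} = a_{ij} λ_{jj} for all i, j. -/
open MvPolynomial Matrix

section Defs

variable {ι : Type*} [Fintype ι] [DecidableEq ι]

/-- An integer matrix is a (generalized) Cartan matrix. -/
def IsCartanMatrix (A : Matrix ι ι ℤ) : Prop :=
  (∀ i, A i i = 2) ∧ (∀ i j, i ≠ j → A i j ≤ 0) ∧ ∀ i j, A i j = 0 → A j i = 0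

/-- The simple root `α_i = ∑ j, a_{ji} ω_j`, viewed inside `ℚ[ω_1, …, ω_n]`. -/
noncomputable def simpleRoot (A : Matrix ι ι ℤ) (i : ι) : MvPolynomial ι ℚ :=
  ∑ j, (A j i : ℚ) • X j

/-- The Weyl reflection `σ_i`, the ℚ-algebra endomorphism with `σ_i(ω_j) = ω_j - δ_{ij} α_i`. -/
noncomputable def weylRefl (A : Matrix ι ι ℤ) (i : ι) :
    MvPolynomial ι ℚ →ₐ[ℚ] MvPolynomial ι ℚ :=
  aeval fun j => X j - if j = i then simpleRoot A i else 0

/-- A polynomial is `W(A)`-invariant iff it is fixed by every simple reflection. -/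
def WeylInvariant (A : Matrix ι ι ℤ) (f : MvPolynomial ι ℚ) : Prop :=
  ∀ i, weylRefl A i f = f

/-- Indecomposability of a Cartan matrix. -/
def Indecomposable (A : Matrix ι ι ℤ) : Prop :=
  ¬∃ I J : Set ι, I.Nonempty ∧ J.Nonempty ∧ Disjoint I J ∧ I ∪ J = Set.univ ∧
    ∀ i ∈ I, ∀ j ∈ J, A i j = 0

/-- `A` is symmetrizable: `A = D B` with `D` invertible diagonal and `B` symmetric. -/
def Symmetrizable (A : Matrix ι ι ℤ) : Prop :=
  ∃ (d : ι → ℚ) (B : Matrix ι ι ℚ), (∀ i, d i ≠ 0) ∧ Bᵀ = B ∧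
    A.map (Int.cast : ℤ → ℚ) = Matrix.diagonal d * B

/-- `A` is of finite type: `xᵀ A x > 0` for all nonzero real `x`. -/
def FiniteType (A : Matrix ι ι ℤ) : Prop :=
  ∀ x : ι → ℝ, x ≠ 0 → 0 < x ⬝ᵥ ((A.map (Int.cast : ℤ → ℝ)) *ᵥ x)

/-- `A` is of affine type: positive semidefinite of rank `n - 1`. -/
def AffineType (A : Matrix ι ι ℤ) : Prop :=
  (∀ x : ι → ℝ, 0 ≤ x ⬝ᵥ ((A.map (Int.cast : ℤ → ℝ)) *ᵥ x)) ∧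
    (A.map (Int.cast : ℤ → ℝ)).rank = Fintype.card ι - 1

/-- `A` is of indefinite type: neither finite nor affine type. -/
def IndefiniteType (A : Matrix ι ι ℤ) : Prop := ¬FiniteType A ∧ ¬AffineType A

end Defs

/-! The reflection `σ_k` substitutes `ω_k ↦ ω_k - α_k`, so for `f = ∑ λ_{ij} ω_i ω_j` one gets
`f - σ_k f = α_k · ℓ_k` with the linear form `ℓ_k = ∑_i (λ_{ik} + λ_{ki} - a_{ik} λ_{kk}) ω_i`.
Since `a_{kk} = 2`, `α_k ≠ 0`, and `ℚ[ω]` is a domain, `σ_k f = f` iff `ℓ_k = 0`, i.e. iff its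
coefficients vanish; by symmetry of `λ` these are `2 λ_{ik} - a_{ik} λ_{kk}`. -/

lemma MvPolynomial.sum_smul_X_eq_zero_iff {σ R : Type*} [Fintype σ] [CommRing R] (c : σ → R) :
    ∑ i, c i • (X i : MvPolynomial σ R) = 0 ↔ ∀ i, c i = 0 :=
  ⟨Fintype.linearIndependent_iff.1 (linearIndependent_X σ R) c, fun h => by simp [h]⟩

lemma sum_sum_smul_sub_ite_mul_sub_ite {ι R S : Type*} [Fintype ι] [DecidableEq ι]
    [CommRing R] [CommRing S] [Algebra R S] (lam : ι → ι → R) (x : ι → S) (k : ι) (a : S) :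
    ∑ i, ∑ j, lam i j • ((x i - if i = k then a else 0) * (x j - if j = k then a else 0)) =
      ∑ i, ∑ j, lam i j • (x i * x j) -
        a * (∑ i, lam i k • x i + ∑ j, lam k j • x j - lam k k • a) := by
  simp only [mul_sub, sub_mul, mul_add, smul_sub, Finset.sum_sub_distrib, mul_ite, ite_mul,
    mul_zero, zero_mul, smul_ite, smul_zero, Finset.sum_ite_irrel, Finset.sum_const_zero,
    Finset.sum_ite_eq', Finset.mem_univ, if_true, Finset.mul_sum, mul_smul_comm, mul_comm (x _) a]
  abel

section Weyl

variable {ι : Type*} [Fintype ι] (A : Matrix ι ι ℤ)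

lemma simpleRoot_ne_zero {i : ι} (h : A i i ≠ 0) : simpleRoot A i ≠ 0 := fun h0 =>
  h (by exact_mod_cast (MvPolynomial.sum_smul_X_eq_zero_iff _).1 h0 i)

variable [DecidableEq ι]

lemma weylRefl_sum_sum_smul_X_mul_X (lam : ι → ι → ℚ) (k : ι) :
    weylRefl A k (∑ i, ∑ j, lam i j • (X i * X j)) =
      ∑ i, ∑ j, lam i j • (X i * X j) -
        simpleRoot A k * ∑ i, (lam i k + lam k i - A i k * lam k k) • X i := by
  simp only [weylRefl, map_sum, _root_.map_smul, _root_.map_mul, aeval_X,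
    sum_sum_smul_sub_ite_mul_sub_ite]
  congr 2
  simp only [simpleRoot, Finset.smul_sum, smul_smul, mul_comm (lam k k), ← Finset.sum_add_distrib,
    ← Finset.sum_sub_distrib, ← add_smul, ← sub_smul]

lemma weylRefl_sum_sum_smul_X_mul_X_eq_self_iff (lam : ι → ι → ℚ) {k : ι} (hk : A k k ≠ 0) :
    weylRefl A k (∑ i, ∑ j, lam i j • (X i * X j)) = ∑ i, ∑ j, lam i j • (X i * X j) ↔
      ∀ i, lam i k + lam k i = A i k * lam k k := by
  rw [weylRefl_sum_sum_smul_X_mul_X, sub_eq_self, mul_eq_zero,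
    or_iff_right (simpleRoot_ne_zero A hk), MvPolynomial.sum_smul_X_eq_zero_iff]
  simp only [sub_eq_zero]

end Weyl

/-- A symmetric quadratic form `∑ λ_{ij} ω_i ω_j` is `W(A)`-invariant iff
`2 λ_{ij} = a_{ij} λ_{jj}` for all `i, j`. -/
theorem quadratic_invariant_iff {n : ℕ}
    (A : Matrix (Fin n) (Fin n) ℤ) (hA : IsCartanMatrix A)
    (lam : Fin n → Fin n → ℚ) (hlam : ∀ i j, lam i j = lam j i) :
    WeylInvariant A (∑ i, ∑ j, lam i j • (X i * X j : MvPolynomial (Fin n) ℚ)) ↔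
      ∀ i j, 2 * lam i j = (A i j : ℚ) * lam j j := by
  have hdiag : ∀ k, A k k ≠ 0 := fun k => by simp [hA.1 k]
  have hsym : ∀ i k, lam i k + lam k i = 2 * lam i k := fun i k => by rw [hlam k i, two_mul]
  simp only [WeylInvariant, weylRefl_sum_sum_smul_X_mul_X_eq_self_iff A lam (hdiag _), hsym]
  exact forall_comm
end

section
/- Let A be an n×n Cartan matrix and let f ∈ ℚ[ω_1,…,ω_n] be homogeneous of degree l with σ_k(f) = f for all k = 1,…,n−1. Writing f = Σ_{i=0}^l f_i·ω_n^{l−i} with each f_i ∈ ℚ[ω_1,…,ω_{n−1}] homogeneous of degree i, the top component f_l is W(A')-invariant: σ'_k(f_l) = f_l for all k = 1,…,n−1. In particular, if f ∈ I(A) then f_l ∈ I(A'). -/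
open MvPolynomial Matrix

/-- The degree-1 element `ω'_n = ∑_{j ≤ n-1} a_{jn} ω_j ∈ ℚ[ω_1, …, ω_{n-1}]`. -/
noncomputable def omegaPrime {n : ℕ} (A : Matrix (Fin (n + 1)) (Fin (n + 1)) ℤ) :
    MvPolynomial (Fin n) ℚ :=
  ∑ j : Fin n, (A j.castSucc (Fin.last n) : ℚ) • X j

/-!
Setting `ω_n = 0` is a ℚ-algebra map `ℚ[ω_1,…,ω_n] → ℚ[ω_1,…,ω_{n-1}]` which sends `f` to its top
component `f_l`. For `k < n` it intertwines `σ_k` with `σ'_k`: the simple root `α_k` loses exactly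
its `ω_n`-term `a_{nk} ω_n` and becomes `α'_k`. Applying it to `σ_k f = f` gives `σ'_k f_l = f_l`.
-/

noncomputable def evalLastZero {R : Type*} [CommSemiring R] {n : ℕ} :
    MvPolynomial (Fin (n + 1)) R →ₐ[R] MvPolynomial (Fin n) R :=
  aeval (Fin.lastCases 0 X)

section EvalLastZero

variable {R : Type*} [CommSemiring R] {n : ℕ}

@[simp]
lemma evalLastZero_X_last : evalLastZero (X (Fin.last n) : MvPolynomial (Fin (n + 1)) R) = 0 := by
  simp [evalLastZero]

@[simp]
lemma evalLastZero_X_castSucc (j : Fin n) :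
    evalLastZero (X j.castSucc : MvPolynomial (Fin (n + 1)) R) = X j := by
  simp [evalLastZero]

@[simp]
lemma evalLastZero_rename_castSucc (p : MvPolynomial (Fin n) R) :
    evalLastZero (rename Fin.castSucc p) = p := by
  induction p using MvPolynomial.induction_on with
  | C a => simp [evalLastZero]
  | add p q hp hq => simp only [map_add, hp, hq]
  | mul_X p j hp => simp only [map_mul, hp, rename_X, evalLastZero_X_castSucc]

lemma evalLastZero_sum_mul_X_last_pow (g : ℕ → MvPolynomial (Fin n) R) (l : ℕ) :
    evalLastZero (∑ i ∈ Finset.range (l + 1),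
      rename Fin.castSucc (g i) * X (Fin.last n) ^ (l - i)) = g l := by
  rw [map_sum, Finset.sum_eq_single_of_mem l (Finset.self_mem_range_succ l)]
  · simp
  · intro i hi hil
    have hpos : l - i ≠ 0 :=
      Nat.sub_ne_zero_of_lt (lt_of_le_of_ne (Finset.mem_range_succ_iff.mp hi) hil)
    simp [zero_pow hpos]

end EvalLastZero

section Submatrix

variable {n : ℕ} (A : Matrix (Fin (n + 1)) (Fin (n + 1)) ℤ)

lemma evalLastZero_simpleRoot_castSucc (k : Fin n) :
    evalLastZero (simpleRoot A k.castSucc) =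
      simpleRoot (A.submatrix Fin.castSucc Fin.castSucc) k := by
  simp [simpleRoot, Fin.sum_univ_castSucc]

lemma evalLastZero_comp_weylRefl_castSucc (k : Fin n) :
    evalLastZero.comp (weylRefl A k.castSucc) =
      (weylRefl (A.submatrix Fin.castSucc Fin.castSucc) k).comp evalLastZero := by
  refine MvPolynomial.algHom_ext fun j => ?_
  induction j using Fin.lastCases with
  | last => simp [weylRefl, (Fin.castSucc_lt_last k).ne']
  | cast j =>
    by_cases hjk : j = k
    · subst hjk
      simp [weylRefl, evalLastZero_simpleRoot_castSucc]
    · simp [weylRefl, hjk]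

end Submatrix

theorem top_component_invariant_general {n l : ℕ}
    (A : Matrix (Fin (n + 1)) (Fin (n + 1)) ℤ)
    (f : MvPolynomial (Fin (n + 1)) ℚ)
    (hinv : ∀ k : Fin n, weylRefl A k.castSucc f = f)
    (g : ℕ → MvPolynomial (Fin n) ℚ)
    (hdec : f = ∑ i ∈ Finset.range (l + 1),
      rename Fin.castSucc (g i) * X (Fin.last n) ^ (l - i)) :
    WeylInvariant (A.submatrix Fin.castSucc Fin.castSucc) (g l) := by
  have htop : evalLastZero f = g l := hdec ▸ evalLastZero_sum_mul_X_last_pow g l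
  intro k
  rw [← htop, ← AlgHom.comp_apply, ← evalLastZero_comp_weylRefl_castSucc, AlgHom.comp_apply,
    hinv k]

/-- if a degree-`l` homogeneous polynomial `f = ∑ f_i ω_n^{l-i}` is fixed by
`σ_1, …, σ_{n-1}`, then its top component `f_l` is `W(A')`-invariant, where `A'` is the
upper-left principal submatrix. -/
theorem top_component_invariant {n l : ℕ}
    (A : Matrix (Fin (n + 1)) (Fin (n + 1)) ℤ) (hA : IsCartanMatrix A)
    (f : MvPolynomial (Fin (n + 1)) ℚ) (hfh : f.IsHomogeneous l)
    (hinv : ∀ k : Fin n, weylRefl A k.castSucc f = f)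
    (g : ℕ → MvPolynomial (Fin n) ℚ) (hg : ∀ i, (g i).IsHomogeneous i)
    (hdec : f = ∑ i ∈ Finset.range (l + 1),
      rename Fin.castSucc (g i) * X (Fin.last n) ^ (l - i)) :
    WeylInvariant (A.submatrix Fin.castSucc Fin.castSucc) (g l) :=
  top_component_invariant_general A f hinv g hdec
end

section
/- Let A be an n×n Cartan matrix and let f ∈ ℚ[ω_1,…,ω_n] be homogeneous of degree l with σ_k(f) = f for all k = 1,…,n−1. Writing f = Σ_{i=0}^l f_i·ω_n^{l−i} with each f_i ∈ ℚ[ω_1,…,ω_{n−1}] homogeneous of degree i, then for every k ∈ {1,…,n−1} and every 0 ≤ i ≤ l: σ'_k(f_i) = Σ_{j=0}^{l−i} ((−a_{nk})^j / j!) · ∂^j f_{i+j} / ∂ω_k^j. -/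
open MvPolynomial Matrix

/-!
For `k < n` the reflection `σ_k` fixes `ω_n`, and since `α_k = α'_k + a_{nk} ω_n`, on
`ℚ[ω_1, …, ω_{n-1}]` it is the shift `ω_k ↦ ω_k - a_{nk} ω_n` followed by `σ'_k`. By Taylor's
formula the coefficient of `ω_n^r` in `σ_k(f_i)` is `(-a_{nk})^r / r! · σ'_k(∂_k^r f_i)`.
Comparing the coefficients of `ω_n^{l-i}` in `σ_k f = f` gives
`f_i = ∑_j (-a_{nk})^j / j! · σ'_k(∂_k^j f_{i+j})`, and `σ'_k` is an involution.
-/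

open Finset Nat

section Taylor

variable {σ R : Type*} [CommSemiring R]

theorem iterate_pderiv_eq_pow_apply (k : σ) (r : ℕ) (p : MvPolynomial σ R) :
    (pderiv k)^[r] p = ((pderiv k).toLinearMap ^ r) p := by
  rw [Module.End.pow_apply]
  rfl

theorem iterate_pderiv_monomial (k : σ) (r : ℕ) (m : σ →₀ ℕ) (c : R) :
    (pderiv k)^[r] (monomial m c) =
      monomial (m - Finsupp.single k r) (c * (m k).descFactorial r) := by
  induction r with
  | zero => simp
  | succ r ih =>
    rw [Function.iterate_succ_apply', ih, pderiv_monomial, tsub_tsub, ← Finsupp.single_add,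
      Finsupp.tsub_apply, Finsupp.single_eq_same, Nat.descFactorial_succ]
    push_cast
    ring_nf

variable [Fintype σ] [DecidableEq σ] {S : Type*} [CommRing S] [Algebra ℚ S]

theorem aeval_monomial_eq_mul_prod_compl (y : σ → S) (k : σ) (m : σ →₀ ℕ) (c : ℚ) :
    aeval y (monomial m c) = algebraMap ℚ S c * y k ^ m k * ∏ j ∈ {k}ᶜ, y j ^ m j := by
  rw [aeval_monomial, Finsupp.prod_fintype _ _ fun _ => pow_zero _,
    Fintype.prod_eq_mul_prod_compl k, mul_assoc]

theorem aeval_update_add_monomial (x : σ → S) (k : σ) (t : S) (m : σ →₀ ℕ) (c : ℚ)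
    {D : ℕ} (hD : m k ≤ D) :
    aeval (Function.update x k (x k + t)) (monomial m c) =
      ∑ r ∈ range (D + 1), ((r ! : ℚ)⁻¹ • t ^ r) * aeval x ((pderiv k)^[r] (monomial m c)) := by
  set P := ∏ j ∈ {k}ᶜ, x j ^ m j
  have hterm : ∀ r, ((r ! : ℚ)⁻¹ • t ^ r) * aeval x ((pderiv k)^[r] (monomial m c)) =
      algebraMap ℚ S c * (t ^ r * x k ^ (m k - r) * (m k).choose r) * P := by
    intro r
    have hcompl : ∏ j ∈ {k}ᶜ, x j ^ (m - Finsupp.single k r) j = P :=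
      prod_congr rfl fun j hj => by
        rw [Finsupp.tsub_apply, Finsupp.single_eq_of_ne (by simpa using hj), tsub_zero]
    rw [iterate_pderiv_monomial, aeval_monomial_eq_mul_prod_compl, hcompl, Finsupp.tsub_apply,
      Finsupp.single_eq_same, Nat.descFactorial_eq_factorial_mul_choose, Algebra.smul_def]
    have hr : algebraMap ℚ S (r ! : ℚ)⁻¹ * (r ! : S) = 1 := by
      rw [← map_natCast (algebraMap ℚ S), ← map_mul, inv_mul_cancel₀ (by positivity), map_one]
    push_cast
    linear_combination (algebraMap ℚ S c * t ^ r * x k ^ (m k - r) * (m k).choose r * P) * hr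
  have hcompl : ∏ j ∈ {k}ᶜ, Function.update x k (x k + t) j ^ m j = P :=
    prod_congr rfl fun j hj => by rw [Function.update_of_ne (by simpa using hj)]
  rw [sum_congr rfl fun r _ => hterm r, ← sum_mul, ← mul_sum, aeval_monomial_eq_mul_prod_compl,
    hcompl, Function.update_self, add_comm, add_pow,
    sum_subset (range_subset_range.mpr (Nat.add_le_add_right hD 1))]
  intro r _ hr
  rw [Nat.choose_eq_zero_of_lt (by simpa using hr), Nat.cast_zero, mul_zero]

theorem aeval_update_add (x : σ → S) (k : σ) (t : S) {p : MvPolynomial σ ℚ} {D : ℕ}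
    (hD : p.degreeOf k ≤ D) :
    aeval (Function.update x k (x k + t)) p =
      ∑ r ∈ range (D + 1), ((r ! : ℚ)⁻¹ • t ^ r) * aeval x ((pderiv k)^[r] p) := by
  have hsum : ∀ r, (pderiv k)^[r] p = ∑ m ∈ p.support, (pderiv k)^[r] (monomial m (coeff m p)) :=
    fun r => by
      simp only [iterate_pderiv_eq_pow_apply]
      conv_lhs => rw [p.as_sum]
      rw [map_sum]
  conv_lhs => rw [p.as_sum, map_sum]
  simp_rw [hsum, map_sum, mul_sum]
  rw [sum_comm]
  exact sum_congr rfl fun m hm =>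
    aeval_update_add_monomial x k t m _ ((monomial_le_degreeOf k hm).trans hD)

end Taylor

section WeylReflection

variable {ι : Type*} [Fintype ι] [DecidableEq ι] (A : Matrix ι ι ℤ) (i : ι)

theorem weylRefl_X (j : ι) :
    weylRefl A i (X j) = X j - if j = i then simpleRoot A i else 0 :=
  aeval_X _ _

theorem weylRefl_X_of_ne {j : ι} (h : j ≠ i) : weylRefl A i (X j) = X j := by
  rw [weylRefl_X, if_neg h, sub_zero]

theorem weylRefl_simpleRoot (hA : A i i = 2) :
    weylRefl A i (simpleRoot A i) = -simpleRoot A i := by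
  have hterm : ∀ j, weylRefl A i ((A j i : ℚ) • X j) =
      (A j i : ℚ) • X j - if j = i then (A i i : ℚ) • simpleRoot A i else 0 := fun j => by
    rw [map_smul, weylRefl_X, smul_sub]
    split_ifs with hj <;> simp [hj]
  rw [simpleRoot, map_sum, sum_congr rfl fun j _ => hterm j, sum_sub_distrib, ← simpleRoot,
    sum_ite_eq' univ i, if_pos (mem_univ i), hA]
  push_cast
  module

theorem weylRefl_weylRefl (hA : A i i = 2) (p : MvPolynomial ι ℚ) :
    weylRefl A i (weylRefl A i p) = p := by
  suffices h : (weylRefl A i).comp (weylRefl A i) = AlgHom.id ℚ _ from AlgHom.congr_fun h p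
  refine algHom_ext fun j => ?_
  rw [AlgHom.comp_apply, AlgHom.id_apply, weylRefl_X]
  split_ifs with hj
  · rw [map_sub, weylRefl_simpleRoot A i hA, hj, weylRefl_X, if_pos rfl]
    ring
  · rw [sub_zero, weylRefl_X_of_ne A i hj]

end WeylReflection

theorem Polynomial.coeff_sum_mul_X_pow_sub {R : Type*} [Semiring R] (P : ℕ → Polynomial R)
    {l m : ℕ} (hm : m ≤ l) :
    (∑ i ∈ range (l + 1), P i * Polynomial.X ^ (l - i)).coeff (l - m) =
      ∑ j ∈ range (l - m + 1), (P (m + j)).coeff j := by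
  rw [Polynomial.finsetSum_coeff, range_eq_Ico,
    ← sum_Ico_consecutive _ (Nat.zero_le m) (Nat.le_succ_of_le hm),
    sum_eq_zero fun i hi => ?_, zero_add, sum_Ico_eq_sum_range, Nat.succ_sub hm]
  · refine sum_congr rfl fun j hj => ?_
    rw [mem_range] at hj
    rw [Polynomial.coeff_mul_X_pow', if_pos (by omega)]
    congr 1
    omega
  · rw [mem_Ico] at hi
    rw [Polynomial.coeff_mul_X_pow', if_neg (by omega)]

noncomputable def lastVarEquiv (R : Type*) [CommSemiring R] (n : ℕ) :
    MvPolynomial (Fin (n + 1)) R ≃ₐ[R] Polynomial (MvPolynomial (Fin n) R) :=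
  (renameEquiv R finSuccEquivLast).trans (optionEquivLeft R (Fin n))

section LastVariable

variable {R : Type*} [CommSemiring R] {n : ℕ}

theorem lastVarEquiv_X_last : lastVarEquiv R n (X (Fin.last n)) = Polynomial.X := by
  simp [lastVarEquiv, finSuccEquivLast_last, optionEquivLeft_X_none]

theorem lastVarEquiv_rename_castSucc (p : MvPolynomial (Fin n) R) :
    lastVarEquiv R n (rename Fin.castSucc p) = Polynomial.C p := by
  suffices h : (lastVarEquiv R n).toAlgHom.comp (rename Fin.castSucc) = Polynomial.CAlgHom from
    AlgHom.congr_fun h p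
  refine algHom_ext fun j => ?_
  simp [lastVarEquiv, finSuccEquivLast_castSucc, optionEquivLeft_X_some]

end LastVariable

section Restriction

variable {n : ℕ} (A : Matrix (Fin (n + 1)) (Fin (n + 1)) ℤ) (k : Fin n)

theorem simpleRoot_castSucc :
    simpleRoot A k.castSucc =
      rename Fin.castSucc (simpleRoot (A.submatrix Fin.castSucc Fin.castSucc) k) +
        (A (Fin.last n) k.castSucc : ℚ) • X (Fin.last n) := by
  simp [simpleRoot, Fin.sum_univ_castSucc, map_sum]

theorem weylRefl_castSucc_comp_rename :
    (weylRefl A k.castSucc).comp (rename Fin.castSucc) =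
      aeval (Function.update (fun j => rename Fin.castSucc
          (weylRefl (A.submatrix Fin.castSucc Fin.castSucc) k (X j))) k
        (rename Fin.castSucc (weylRefl (A.submatrix Fin.castSucc Fin.castSucc) k (X k)) +
          (-(A (Fin.last n) k.castSucc : ℚ)) • X (Fin.last n))) := by
  refine algHom_ext fun j => ?_
  rw [AlgHom.comp_apply, rename_X, aeval_X]
  rcases eq_or_ne j k with rfl | hj
  · rw [Function.update_self, weylRefl_X, if_pos rfl, weylRefl_X, if_pos rfl, map_sub, rename_X,
      simpleRoot_castSucc]
    module
  · rw [Function.update_of_ne hj, weylRefl_X_of_ne _ _ hj, rename_X,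
      weylRefl_X_of_ne _ _ ((Fin.castSucc_injective n).ne hj)]

theorem coeff_lastVarEquiv_weylRefl_castSucc_rename (p : MvPolynomial (Fin n) ℚ) (r : ℕ) :
    (lastVarEquiv ℚ n (weylRefl A k.castSucc (rename Fin.castSucc p))).coeff r =
      ((-(A (Fin.last n) k.castSucc : ℚ)) ^ r / r !) •
        weylRefl (A.submatrix Fin.castSucc Fin.castSucc) k ((pderiv k)^[r] p) := by
  rw [← AlgHom.comp_apply, weylRefl_castSucc_comp_rename,
    aeval_update_add _ k _ (le_add_right le_rfl : p.degreeOf k ≤ p.degreeOf k + r), map_sum,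
    Polynomial.finsetSum_coeff]
  set σ' := weylRefl (A.submatrix Fin.castSucc Fin.castSucc) k
  set c : ℚ := -(A (Fin.last n) k.castSucc : ℚ)
  have hφ : aeval (fun j => rename Fin.castSucc (σ' (X j))) = (rename Fin.castSucc).comp σ' :=
    algHom_ext fun j => by rw [aeval_X, AlgHom.comp_apply]
  have hterm : ∀ s, lastVarEquiv ℚ n (((s ! : ℚ)⁻¹ • (c • X (Fin.last n)) ^ s) *
      aeval (fun j => rename Fin.castSucc (σ' (X j))) ((pderiv k)^[s] p)) =
      Polynomial.C ((c ^ s / s !) • σ' ((pderiv k)^[s] p)) * Polynomial.X ^ s := fun s => by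
    rw [hφ, AlgHom.comp_apply, map_mul, map_smul, map_pow, map_smul, lastVarEquiv_X_last,
      lastVarEquiv_rename_castSucc, ← Polynomial.smul_C, smul_pow, smul_smul, smul_mul_assoc,
      smul_mul_assoc, div_eq_inv_mul, Polynomial.X_pow_mul]
  simp_rw [hterm, Polynomial.coeff_C_mul_X_pow]
  rw [sum_ite_eq, if_pos (mem_range.mpr (by omega))]

end Restriction

theorem components_reflection_formula_general {n l : ℕ}
    (A : Matrix (Fin (n + 1)) (Fin (n + 1)) ℤ) (hA : IsCartanMatrix A)
    (f : MvPolynomial (Fin (n + 1)) ℚ)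
    (hinv : ∀ k : Fin n, weylRefl A k.castSucc f = f)
    (g : ℕ → MvPolynomial (Fin n) ℚ)
    (hdec : f = ∑ i ∈ Finset.range (l + 1),
      rename Fin.castSucc (g i) * X (Fin.last n) ^ (l - i)) :
    ∀ k : Fin n, ∀ i ≤ l,
      weylRefl (A.submatrix Fin.castSucc Fin.castSucc) k (g i) =
        ∑ j ∈ Finset.range (l - i + 1),
          ((-(A (Fin.last n) k.castSucc : ℚ)) ^ j / (Nat.factorial j : ℚ)) •
            (fun h => pderiv k h)^[j] (g (i + j)) := by
  intro k i hi
  have hcoeff := congrArg (fun f => (lastVarEquiv ℚ n f).coeff (l - i)) (hinv k)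
  simp only [hdec, map_sum, map_mul, map_pow, weylRefl_X_of_ne A _ (Fin.castSucc_lt_last k).ne',
    lastVarEquiv_X_last, lastVarEquiv_rename_castSucc,
    Polynomial.coeff_sum_mul_X_pow_sub _ hi, coeff_lastVarEquiv_weylRefl_castSucc_rename,
    Polynomial.coeff_C] at hcoeff
  rw [sum_ite_eq' (range (l - i + 1)) 0, if_pos (mem_range.mpr (Nat.succ_pos _)), add_zero]
    at hcoeff
  rw [← hcoeff, map_sum]
  refine sum_congr rfl fun j _ => ?_
  rw [map_smul, weylRefl_weylRefl (A.submatrix Fin.castSucc Fin.castSucc) k (hA.1 k.castSucc)]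

/-- if a degree-`l` homogeneous polynomial `f = ∑ f_i ω_n^{l-i}` is fixed by
`σ_1, …, σ_{n-1}`, then `σ'_k(f_i) = ∑_{j=0}^{l-i} ((-a_{nk})^j / j!) ∂^j f_{i+j} / ∂ω_k^j`. -/
theorem components_reflection_formula {n l : ℕ}
    (A : Matrix (Fin (n + 1)) (Fin (n + 1)) ℤ) (hA : IsCartanMatrix A)
    (f : MvPolynomial (Fin (n + 1)) ℚ) (hfh : f.IsHomogeneous l)
    (hinv : ∀ k : Fin n, weylRefl A k.castSucc f = f)
    (g : ℕ → MvPolynomial (Fin n) ℚ) (hg : ∀ i, (g i).IsHomogeneous i)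
    (hdec : f = ∑ i ∈ Finset.range (l + 1),
      rename Fin.castSucc (g i) * X (Fin.last n) ^ (l - i)) :
    ∀ k : Fin n, ∀ i ≤ l,
      weylRefl (A.submatrix Fin.castSucc Fin.castSucc) k (g i) =
        ∑ j ∈ Finset.range (l - i + 1),
          ((-(A (Fin.last n) k.castSucc : ℚ)) ^ j / (Nat.factorial j : ℚ)) •
            (fun h => pderiv k h)^[j] (g (i + j)) :=
  components_reflection_formula_general A hA f hinv g hdec
end

section
/- Let A be an n×n Cartan matrix and let f ∈ I(A) be homogeneous of degree l, written f = Σ_{i=0}^l f_i·ω_n^{l−i} with each f_i ∈ ℚ[ω_1,…,ω_{n−1}] homogeneous of degree i. Then ω'_n = Σ_{j=1}^{n−1} a_{jn} ω_j divides f_{l−1} in ℚ[ω_1,…,ω_{n−1}]. -/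
open MvPolynomial Matrix

/-!
Regard `f` as a polynomial `P` in `ω_n` over `ℚ[ω_1, …, ω_{n-1}]`. The reflection `σ_n` fixes
`ω_1, …, ω_{n-1}` and, since `a_{nn} = 2`, sends `ω_n` to `-ω_n - ω'_n`; so invariance reads
`P(X) = P(-X - ω'_n)`. Modulo `ω'_n` this is `P(X) ≡ P(-X)`, whose linear coefficient gives
`2 f_{l-1} ≡ 0`, and `2` is invertible.
-/

namespace Polynomial

variable {R : Type*} [CommRing R]

theorem dvd_two_mul_coeff_one_of_comp_neg_X_sub_C_eq {p : R[X]} {c : R}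
    (h : p.comp (-X - C c) = p) : c ∣ 2 * p.coeff 1 := by
  have coeff_one (q : R[X]) : q.coeff 1 = (derivative q).eval 0 := by
    simpa using taylor_coeff_one (r := (0 : R)) (f := q)
  have hcoeff : p.coeff 1 = -(derivative p).eval (-c) := by
    conv_lhs => rw [← h]
    simp [coeff_one, derivative_comp]
  have hdvd : c ∣ (derivative p).eval (-c) - p.coeff 1 := by
    simpa [coeff_one] using sub_dvd_eval_sub (-c) 0 (derivative p)
  have : 2 * p.coeff 1 = -((derivative p).eval (-c) - p.coeff 1) := by rw [hcoeff]; ring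
  rw [this, dvd_neg]
  exact hdvd

theorem coeff_sum_C_mul_X_pow_sub (g : ℕ → R) {k l : ℕ} (hk : k ≤ l) :
    (∑ i ∈ Finset.range (l + 1), C (g i) * X ^ (l - i)).coeff k = g (l - k) := by
  rw [finsetSum_coeff, Finset.sum_eq_single (l - k)]
  · rw [coeff_C_mul_X_pow, if_pos (by omega)]
  · intro i hi hne
    rw [coeff_C_mul_X_pow, if_neg (by simp at hi; omega)]
  · intro h
    exact absurd (Finset.mem_range.2 (by omega)) h

end Polynomial

namespace MvPolynomial

variable {R : Type*} [CommRing R] {n : ℕ}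

noncomputable def toPolynomialInLast :
    MvPolynomial (Fin (n + 1)) R →ₐ[R] Polynomial (MvPolynomial (Fin n) R) :=
  aeval (Fin.lastCases Polynomial.X fun j => Polynomial.C (X j))

@[simp]
theorem toPolynomialInLast_X_last :
    toPolynomialInLast (X (Fin.last n) : MvPolynomial _ R) = Polynomial.X := by
  simp [toPolynomialInLast]

@[simp]
theorem toPolynomialInLast_X_castSucc (j : Fin n) :
    toPolynomialInLast (X j.castSucc : MvPolynomial _ R) = Polynomial.C (X j) := by
  simp [toPolynomialInLast]

@[simp]
theorem toPolynomialInLast_rename_castSucc (p : MvPolynomial (Fin n) R) :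
    toPolynomialInLast (rename Fin.castSucc p) = Polynomial.C p := by
  induction p using MvPolynomial.induction_on with
  | C a => simp [toPolynomialInLast, Polynomial.C_eq_algebraMap]
  | add p q hp hq => simp [hp, hq]
  | mul_X p j hp => simp [hp]

end MvPolynomial

section WeylReflLast

variable {n : ℕ} (A : Matrix (Fin (n + 1)) (Fin (n + 1)) ℤ)

theorem toPolynomialInLast_simpleRoot_last (hA : A (Fin.last n) (Fin.last n) = 2) :
    toPolynomialInLast (simpleRoot A (Fin.last n)) =
      Polynomial.C (omegaPrime A) + 2 * Polynomial.X := by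
  simp [simpleRoot, omegaPrime, Fin.sum_univ_castSucc, hA, Polynomial.smul_C, two_smul, two_mul]

theorem weylRefl_last_X_castSucc (j : Fin n) :
    weylRefl A (Fin.last n) (X j.castSucc) = X j.castSucc := by
  simp [weylRefl, (Fin.castSucc_lt_last j).ne]

theorem toPolynomialInLast_weylRefl_last (hA : A (Fin.last n) (Fin.last n) = 2)
    (p : MvPolynomial (Fin (n + 1)) ℚ) :
    toPolynomialInLast (weylRefl A (Fin.last n) p) =
      (toPolynomialInLast p).comp (-Polynomial.X - Polynomial.C (omegaPrime A)) := by
  simp_rw [Polynomial.comp_eq_aeval]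
  suffices toPolynomialInLast.comp (weylRefl A (Fin.last n)) =
      ((Polynomial.aeval (-Polynomial.X - Polynomial.C (omegaPrime A))).restrictScalars ℚ).comp
        toPolynomialInLast from congr($this p)
  refine MvPolynomial.algHom_ext fun j => j.lastCases ?_ fun j => ?_
  · simp only [AlgHom.comp_apply, weylRefl, aeval_X, if_pos, map_sub, toPolynomialInLast_X_last,
      toPolynomialInLast_simpleRoot_last A hA, AlgHom.coe_restrictScalars', Polynomial.aeval_X]
    ring
  · simp [weylRefl_last_X_castSucc]

end WeylReflLast

theorem omegaPrime_dvd_component_general {n l : ℕ} (hl : 1 ≤ l)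
    (A : Matrix (Fin (n + 1)) (Fin (n + 1)) ℤ) (hA : IsCartanMatrix A)
    (f : MvPolynomial (Fin (n + 1)) ℚ)
    (hfinv : WeylInvariant A f)
    (g : ℕ → MvPolynomial (Fin n) ℚ)
    (hdec : f = ∑ i ∈ Finset.range (l + 1),
      rename Fin.castSucc (g i) * X (Fin.last n) ^ (l - i)) :
    omegaPrime A ∣ g (l - 1) := by
  set P := toPolynomialInLast f
  have hP : P = ∑ i ∈ Finset.range (l + 1), Polynomial.C (g i) * Polynomial.X ^ (l - i) := by
    simp [P, hdec]
  have hPinv : P.comp (-Polynomial.X - Polynomial.C (omegaPrime A)) = P := by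
    rw [← toPolynomialInLast_weylRefl_last A (hA.1 _), hfinv]
  have hdvd := Polynomial.dvd_two_mul_coeff_one_of_comp_neg_X_sub_C_eq hPinv
  rwa [hP, Polynomial.coeff_sum_C_mul_X_pow_sub g hl, ← map_ofNat C,
    (IsUnit.map C (isUnit_of_invertible (2 : ℚ))).dvd_mul_left] at hdvd

/-- for `f = ∑ f_i ω_n^{l-i} ∈ I(A)` homogeneous of degree `l`, the element
`ω'_n = ∑_{j ≤ n-1} a_{jn} ω_j` divides the component `f_{l-1}`. -/
theorem omegaPrime_dvd_component {n l : ℕ} (hl : 1 ≤ l)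
    (A : Matrix (Fin (n + 1)) (Fin (n + 1)) ℤ) (hA : IsCartanMatrix A)
    (f : MvPolynomial (Fin (n + 1)) ℚ) (hfh : f.IsHomogeneous l)
    (hfinv : WeylInvariant A f)
    (g : ℕ → MvPolynomial (Fin n) ℚ) (hg : ∀ i, (g i).IsHomogeneous i)
    (hdec : f = ∑ i ∈ Finset.range (l + 1),
      rename Fin.castSucc (g i) * X (Fin.last n) ^ (l - i)) :
    omegaPrime A ∣ g (l - 1) :=
  omegaPrime_dvd_component_general hl A hA f hfinv g hdec
end

section
/- Let A be an n×n indecomposable Cartan matrix of indefinite type that is not hyperbolic. Then there exists k ∈ {1,…,n} such that the (n−1)×(n−1) principal submatrix of A obtained by deleting row and column k is an indecomposable Cartan matrix of indefinite type. -/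
open MvPolynomial Matrix

/-- `A` is hyperbolic: of indefinite type, and every proper (nonempty) principal submatrix is
of finite or affine type. -/
def Hyperbolic {ι : Type*} [Fintype ι] [DecidableEq ι] (A : Matrix ι ι ℤ) : Prop :=
  IndefiniteType A ∧ ∀ S : Finset ι, S.Nonempty → S ≠ Finset.univ →
    FiniteType (A.submatrix (fun i : S => (i : ι)) (fun i : S => (i : ι))) ∨
    AffineType (A.submatrix (fun i : S => (i : ι)) (fun i : S => (i : ι)))

/-!
Since `A` is not hyperbolic, some proper principal submatrix `A_S` is indefinite, so some `x ≠ 0`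
supported in `S` has `xᵀ A x ≤ 0`. Such an `x` of minimal support has connected support in the
Dynkin diagram (otherwise one of its two halves would do), and a connected set avoiding a vertex
extends to the complement `{k}ᶜ` of a non-cut vertex `k`. Deleting row and column `k` leaves an
indecomposable matrix that is not of finite type because of `x`. It is not affine either: if the
support of `x` is all of `{k}ᶜ`, then `{k}ᶜ = S`; otherwise `x` is an isotropic vector with a zero
entry, which a positive semidefinite indecomposable matrix with nonpositive off-diagonal entries
does not have.
-/

open Function

theorem Set.eq_compl_singleton_of_compl_singleton_subset {α : Type*} {s : Set α} {a : α}
    (h : {a}ᶜ ⊆ s) (hs : s ≠ Set.univ) : s = {a}ᶜ :=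
  (compl_eq_comm.1 ((Set.nonempty_compl.2 hs).subset_singleton_iff.1
    (Set.compl_subset_comm.1 h))).symm

namespace SimpleGraph

variable {V W : Type*} {G : SimpleGraph V}

theorem Preconnected.exists_adj_mem_notMem (hG : G.Preconnected) {s : Set V} {a b : V}
    (ha : a ∈ s) (hb : b ∉ s) : ∃ u ∈ s, ∃ v ∉ s, G.Adj u v := by
  obtain ⟨p⟩ := hG a b
  obtain ⟨d, -, hd₁, hd₂⟩ := p.exists_boundary_dart s ha hb
  exact ⟨_, hd₁, _, hd₂, d.adj⟩

theorem Preconnected.exists_insert_preconnected_induce (hG : G.Preconnected) {s : Set V}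
    (hs : s.Nonempty) (hsG : (G.induce s).Preconnected) (hsu : s ≠ Set.univ) :
    ∃ v ∉ s, (G.induce (insert v s)).Preconnected := by
  obtain ⟨a, ha⟩ := hs
  obtain ⟨b, hb⟩ := (Set.ne_univ_iff_exists_notMem s).1 hsu
  obtain ⟨u, hu, v, hv, huv⟩ := hG.exists_adj_mem_notMem ha hb
  refine ⟨v, hv, ?_⟩
  rw [Set.insert_eq, Set.union_comm]
  exact (connected_induce_union hsG (.of_subsingleton : (G.induce {v}).Preconnected) hu
    (Set.mem_singleton v) huv).preconnected

theorem Preconnected.exists_preconnected_induce_compl_singleton [Finite V] (hG : G.Preconnected)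
    {s : Set V} (hs : s.Nonempty) (hsG : (G.induce s).Preconnected) (hsu : s ≠ Set.univ) :
    ∃ k ∉ s, (G.induce {k}ᶜ).Preconnected := by
  induction s using WellFoundedGT.induction with
  | _ s ih =>
    obtain ⟨v, hv, hvG⟩ := hG.exists_insert_preconnected_induce hs hsG hsu
    by_cases h : insert v s = Set.univ
    · have hs : s = {v}ᶜ := Set.ext fun x =>
        ⟨fun hx hxv => hv (hxv ▸ hx),
          fun hxv => ((h ▸ Set.mem_univ x : x ∈ insert v s)).resolve_left hxv⟩
      exact ⟨v, hv, hs ▸ hsG⟩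
    · obtain ⟨k, hk, hkG⟩ := ih _ (Set.ssubset_insert hv) (Set.insert_nonempty _ _) hvG h
      exact ⟨k, fun hks => hk (Set.mem_insert_of_mem _ hks), hkG⟩

theorem preconnected_comap_iff_induce_range {f : W → V} (hf : Injective f) :
    (G.comap f).Preconnected ↔ (G.induce (Set.range f)).Preconnected :=
  Iso.preconnected_iff { toEquiv := Equiv.ofInjective f hf, map_rel_iff' := Iff.rfl }

end SimpleGraph

namespace Matrix

variable {ι κ κ' R : Type*}

/-- The Dynkin diagram of `M`, forgetting multiplicities and orientations. -/
def dynkinGraph [Zero R] (M : Matrix ι ι R) : SimpleGraph ι :=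
  SimpleGraph.fromRel fun i j => M i j ≠ 0

theorem dynkinGraph_adj [Zero R] {M : Matrix ι ι R} {i j : ι} :
    M.dynkinGraph.Adj i j ↔ i ≠ j ∧ (M i j ≠ 0 ∨ M j i ≠ 0) :=
  SimpleGraph.fromRel_adj _ _ _

theorem dynkinGraph_map {S : Type*} [Zero R] [Zero S] (M : Matrix ι ι R) {f : R → S}
    (hf : ∀ a, f a = 0 ↔ a = 0) : (M.map f).dynkinGraph = M.dynkinGraph := by
  ext i j
  simp [dynkinGraph_adj, hf]

theorem dynkinGraph_submatrix [Zero R] (M : Matrix ι ι R) {f : κ → ι} (hf : Injective f) :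
    (M.submatrix f f).dynkinGraph = M.dynkinGraph.comap f := by
  ext i j
  simp [dynkinGraph_adj, hf.ne_iff]

theorem indecomposable_iff_preconnected_dynkinGraph {A : Matrix ι ι ℤ}
    (hA : ∀ i j, A i j = 0 → A j i = 0) : Indecomposable A ↔ A.dynkinGraph.Preconnected := by
  constructor
  · intro h u v
    by_contra huv
    refine h ⟨{i | A.dynkinGraph.Reachable u i}, {i | A.dynkinGraph.Reachable u i}ᶜ,
      ⟨u, .refl u⟩, ⟨v, huv⟩, disjoint_compl_right, Set.union_compl_self _,
      fun i hi j hj => ?_⟩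
    by_contra hij
    exact hj (hi.trans (dynkinGraph_adj.2 ⟨fun h => hj (by rwa [← h]), .inl hij⟩).reachable)
  · rintro hG ⟨I, J, ⟨a, ha⟩, ⟨b, hb⟩, hIJ, hU, h0⟩
    obtain ⟨i, hi, j, hj, hij⟩ :=
      hG.exists_adj_mem_notMem ha (Set.disjoint_right.1 hIJ hb)
    have hjJ : j ∈ J := ((hU ▸ Set.mem_univ j : j ∈ I ∪ J)).resolve_left hj
    rcases (dynkinGraph_adj.1 hij).2 with h | h
    · exact h (h0 i hi j hjJ)
    · exact h (hA _ _ (h0 i hi j hjJ))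

theorem comp_eq_zero_iff_of_support_subset [Zero R] {f : κ → ι} {x : ι → R}
    (hx : x.support ⊆ Set.range f) : x ∘ f = 0 ↔ x = 0 := by
  refine ⟨fun h => funext fun i => ?_, fun h => h ▸ rfl⟩
  by_cases hi : i ∈ Set.range f
  · obtain ⟨a, rfl⟩ := hi
    exact congrFun h a
  · exact notMem_support.1 fun h => hi (hx h)

section QuadraticForm

variable [Fintype ι]

theorem dotProduct_mulVec_submatrix_comp [Fintype κ] [CommSemiring R] (M : Matrix ι ι R)
    {f : κ → ι} (hf : Injective f) {x : ι → R} (hx : x.support ⊆ Set.range f) :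
    (x ∘ f) ⬝ᵥ (M.submatrix f f *ᵥ (x ∘ f)) = x ⬝ᵥ (M *ᵥ x) := by
  have hx' : ∀ i ∉ Set.range f, x i = 0 := fun i hi => notMem_support.1 fun h => hi (hx h)
  simp only [dotProduct, mulVec]
  refine Fintype.sum_of_injective f hf _ _ (fun i hi => by simp [hx' i hi]) fun a => ?_
  simp only [submatrix_apply]
  congr 1
  exact Fintype.sum_of_injective f hf _ _ (fun j hj => by simp [hx' j hj]) fun b => rfl

theorem dotProduct_mulVec_eq_zero [CommSemiring R] {M : Matrix ι ι R} {y z : ι → R}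
    (h : ∀ i j, y i ≠ 0 → z j ≠ 0 → M i j = 0) : y ⬝ᵥ (M *ᵥ z) = 0 := by
  simp only [dotProduct, mulVec, Finset.mul_sum]
  refine Finset.sum_eq_zero fun i _ => Finset.sum_eq_zero fun j _ => ?_
  by_cases hi : y i = 0
  · simp [hi]
  by_cases hj : z j = 0
  · simp [hj]
  simp [h i j hi hj]

theorem add_dotProduct_mulVec_add [CommSemiring R] {M : Matrix ι ι R} {y z : ι → R}
    (h : ∀ i j, y i ≠ 0 → z j ≠ 0 → M i j = 0 ∧ M j i = 0) :
    (y + z) ⬝ᵥ (M *ᵥ (y + z)) = y ⬝ᵥ (M *ᵥ y) + z ⬝ᵥ (M *ᵥ z) := by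
  have hyz : y ⬝ᵥ (M *ᵥ z) = 0 := dotProduct_mulVec_eq_zero fun i j hi hj => (h i j hi hj).1
  have hzy : z ⬝ᵥ (M *ᵥ y) = 0 := dotProduct_mulVec_eq_zero fun i j hi hj => (h j i hj hi).2
  simp only [mulVec_add, dotProduct_add, add_dotProduct, hyz, hzy]
  ring

theorem abs_dotProduct_mulVec_abs_le {M : Matrix ι ι ℝ} (hM : ∀ i j, i ≠ j → M i j ≤ 0)
    (x : ι → ℝ) : |x| ⬝ᵥ (M *ᵥ |x|) ≤ x ⬝ᵥ (M *ᵥ x) := by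
  simp only [dotProduct, mulVec, Finset.mul_sum, Pi.abs_apply]
  refine Finset.sum_le_sum fun i _ => Finset.sum_le_sum fun j _ => ?_
  rcases eq_or_ne i j with rfl | hij
  · linear_combination M i i * abs_mul_abs_self (x i)
  · have h : x i * x j ≤ |x i| * |x j| := abs_mul (x i) (x j) ▸ le_abs_self _
    nlinarith [mul_le_mul_of_nonpos_left h (hM i j hij)]

theorem add_transpose_mulVec_eq_zero {M : Matrix ι ι ℝ} (hM : ∀ z, 0 ≤ z ⬝ᵥ (M *ᵥ z))
    {y : ι → ℝ} (hy : y ⬝ᵥ (M *ᵥ y) = 0) : (M + Mᵀ) *ᵥ y = 0 := by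
  have hsymm : ∀ z : ι → ℝ, z ⬝ᵥ ((M + Mᵀ) *ᵥ z) = 2 * (z ⬝ᵥ (M *ᵥ z)) := fun z => by
    rw [add_mulVec, dotProduct_add, mulVec_transpose, dotProduct_comm z (z ᵥ* M),
      ← dotProduct_mulVec]
    ring
  have hpsd : (M + Mᵀ).PosSemidef := by
    refine .of_dotProduct_mulVec_nonneg ?_ fun z => ?_
    · simp [IsHermitian, conjTranspose_eq_transpose_of_trivial, add_comm]
    · simpa [hsymm] using hM z
  exact (hpsd.dotProduct_mulVec_zero_iff y).1 (by simp [hsymm, hy])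

/-- Perron–Frobenius: `|x|` is again isotropic, hence in the radical of the form, and at a zero
entry of `|x|` the radical equation is a sum of nonpositive terms, so every neighbour of a zero
entry is a zero entry. -/
theorem apply_ne_zero_of_dotProduct_mulVec_nonpos {M : Matrix ι ι ℝ}
    (hM : ∀ i j, i ≠ j → M i j ≤ 0) (hG : M.dynkinGraph.Preconnected)
    (hpsd : ∀ z, 0 ≤ z ⬝ᵥ (M *ᵥ z)) {x : ι → ℝ} (hx0 : x ≠ 0) (hx : x ⬝ᵥ (M *ᵥ x) ≤ 0)
    (i : ι) : x i ≠ 0 := by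
  have hrad : (M + Mᵀ) *ᵥ |x| = 0 :=
    add_transpose_mulVec_eq_zero hpsd
      (le_antisymm ((abs_dotProduct_mulVec_abs_le hM x).trans hx) (hpsd _))
  have hnoAdj : ∀ u v, x u = 0 → x v ≠ 0 → ¬M.dynkinGraph.Adj u v := by
    intro u v hu hv huv
    have huv' : u ≠ v := (dynkinGraph_adj.1 huv).1
    have hterms : ∀ j ∈ Finset.univ, (M + Mᵀ) u j * |x j| ≤ 0 := fun j _ => by
      rcases eq_or_ne u j with rfl | huj
      · simp [hu]
      · exact mul_nonpos_of_nonpos_of_nonneg (add_nonpos (hM _ _ huj) (hM _ _ huj.symm))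
          (abs_nonneg _)
    have hsum : ∑ j, (M + Mᵀ) u j * |x j| = 0 := by
      simpa [mulVec, dotProduct] using congrFun hrad u
    have h := (Finset.sum_eq_zero_iff_of_nonpos hterms).1 hsum v (Finset.mem_univ v)
    have hMuv : M u v + M v u = 0 := by
      simpa [abs_eq_zero, hv] using h
    have hMuv' : M u v = 0 ∧ M v u = 0 := by
      constructor <;> linarith [hM u v huv', hM v u huv'.symm]
    exact (dynkinGraph_adj.1 huv).2.elim (· hMuv'.1) (· hMuv'.2)
  obtain ⟨j, hj⟩ := Function.ne_iff.1 hx0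
  by_contra hi
  obtain ⟨u, hu, v, hv, huv⟩ := hG.exists_adj_mem_notMem (s := {j | x j = 0}) hi hj
  exact hnoAdj u v hu hv huv

theorem exists_support_ssubset_of_not_preconnected {M : Matrix ι ι ℝ} {x : ι → ℝ}
    (hx : x ⬝ᵥ (M *ᵥ x) ≤ 0) (hconn : ¬(M.dynkinGraph.induce x.support).Preconnected) :
    ∃ y : ι → ℝ, y ≠ 0 ∧ y.support ⊂ x.support ∧ y ⬝ᵥ (M *ᵥ y) ≤ 0 := by
  simp only [SimpleGraph.Preconnected, not_forall] at hconn
  obtain ⟨a, b, hab⟩ := hconn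
  set B : Set ι :=
    {i | ∃ h : i ∈ x.support, (M.dynkinGraph.induce x.support).Reachable a ⟨i, h⟩}
  have haB : a.1 ∈ B := ⟨a.2, .refl _⟩
  have hbB : b.1 ∉ B := fun ⟨_, h⟩ => hab h
  have hcross : ∀ i j, B.indicator x i ≠ 0 → Bᶜ.indicator x j ≠ 0 → M i j = 0 ∧ M j i = 0 := by
    intro i j hi hj
    rw [Set.indicator_apply_ne_zero] at hi hj
    obtain ⟨⟨hix, hreach⟩, -⟩ := hi
    by_contra hne
    have hij : M.dynkinGraph.Adj i j :=
      dynkinGraph_adj.2 ⟨fun h => hj.1 (by subst h; exact ⟨hix, hreach⟩), by tauto⟩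
    exact hj.1 ⟨hj.2, hreach.trans (SimpleGraph.Adj.reachable hij)⟩
  have hsplit := add_dotProduct_mulVec_add hcross
  rw [Set.indicator_self_add_compl] at hsplit
  have hsupp : ∀ s : Set ι, (s.indicator x).support ⊆ x.support := fun s => by
    rw [Set.support_indicator]
    exact Set.inter_subset_right
  by_cases hq : B.indicator x ⬝ᵥ (M *ᵥ B.indicator x) ≤ 0
  · refine ⟨B.indicator x, Function.ne_iff.2 ⟨a, ?_⟩, ?_, hq⟩
    · rw [Set.indicator_of_mem haB]
      exact a.2
    · refine (Set.ssubset_iff_of_subset (hsupp B)).2 ⟨b, b.2, ?_⟩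
      rw [notMem_support, Set.indicator_of_notMem hbB]
  · refine ⟨Bᶜ.indicator x, Function.ne_iff.2 ⟨b, ?_⟩, ?_, by linarith⟩
    · rw [Set.indicator_of_mem (Set.mem_compl hbB)]
      exact b.2
    · refine (Set.ssubset_iff_of_subset (hsupp Bᶜ)).2 ⟨a, a.2, ?_⟩
      rw [notMem_support, Set.indicator_of_notMem (not_not.2 haB)]

theorem exists_preconnected_support {M : Matrix ι ι ℝ} {x : ι → ℝ} (hx0 : x ≠ 0)
    (hx : x ⬝ᵥ (M *ᵥ x) ≤ 0) :
    ∃ y : ι → ℝ, y ≠ 0 ∧ y.support ⊆ x.support ∧ y ⬝ᵥ (M *ᵥ y) ≤ 0 ∧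
      (M.dynkinGraph.induce y.support).Preconnected := by
  obtain ⟨y, ⟨hy0, hyx, hy⟩, hmin⟩ := (wellFounded_lt.onFun (f := Function.support)).has_min
    {y : ι → ℝ | y ≠ 0 ∧ y.support ⊆ x.support ∧ y ⬝ᵥ (M *ᵥ y) ≤ 0} ⟨x, hx0, subset_rfl, hx⟩
  refine ⟨y, hy0, hyx, hy, ?_⟩
  by_contra hconn
  obtain ⟨z, hz0, hzy, hz⟩ := exists_support_ssubset_of_not_preconnected hy hconn
  exact hmin z ⟨hz0, hzy.subset.trans hyx, hz⟩ hzy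

end QuadraticForm

section CartanTypes

variable [Fintype ι] [Fintype κ] [Fintype κ'] (A : Matrix ι ι ℤ)

theorem finiteType_submatrix_iff {f : κ → ι} (hf : Injective f) :
    FiniteType (A.submatrix f f) ↔ ∀ x : ι → ℝ, x ≠ 0 → x.support ⊆ Set.range f →
      0 < x ⬝ᵥ (A.map (Int.cast : ℤ → ℝ) *ᵥ x) := by
  simp only [FiniteType, ← submatrix_map]
  refine ⟨fun h x hx0 hx => ?_, fun h y hy0 => ?_⟩
  · rw [← dotProduct_mulVec_submatrix_comp _ hf hx]
    exact h _ fun h0 => hx0 ((comp_eq_zero_iff_of_support_subset hx).1 h0)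
  · have hy : extend f y 0 ∘ f = y := Function.extend_comp hf y 0
    have hsupp : (extend f y 0).support ⊆ Set.range f := fun i hi => by
      by_contra hir
      exact hi (extend_apply' _ _ _ hir)
    have h' := h (extend f y 0) (fun h0 => hy0 (by rw [← hy, h0]; rfl)) hsupp
    rwa [← dotProduct_mulVec_submatrix_comp _ hf hsupp, hy] at h'

theorem affineType_submatrix_equiv_iff (e : κ ≃ ι) :
    AffineType (A.submatrix e e) ↔ AffineType A := by
  have hsupp : ∀ x : ι → ℝ, x.support ⊆ Set.range e := fun x _ _ => by simp
  simp only [AffineType, ← submatrix_map, rank_submatrix, Fintype.card_congr e]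
  refine and_congr_left' ⟨fun h x => ?_, fun h y => ?_⟩
  · rw [← dotProduct_mulVec_submatrix_comp _ e.injective (hsupp x)]
    exact h _
  · have h' := h (y ∘ e.symm)
    rwa [← dotProduct_mulVec_submatrix_comp _ e.injective (hsupp _), comp_assoc,
      e.symm_comp_self, comp_id] at h'

theorem indefiniteType_submatrix_congr {f : κ → ι} {g : κ' → ι} (hf : Injective f)
    (hg : Injective g) (h : Set.range f = Set.range g) :
    IndefiniteType (A.submatrix f f) ↔ IndefiniteType (A.submatrix g g) := by
  let e : κ ≃ κ' := (Equiv.ofInjective f hf).trans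
    ((Equiv.setCongr h).trans (Equiv.ofInjective g hg).symm)
  have hge : g ∘ e = f := funext fun a => by simp [e, Equiv.apply_ofInjective_symm]
  unfold IndefiniteType
  rw [finiteType_submatrix_iff A hf, finiteType_submatrix_iff A hg, h,
    ← affineType_submatrix_equiv_iff (A.submatrix g g) e, submatrix_submatrix, hge]

theorem indefiniteType_submatrix_of_support_ssubset (hA : ∀ i j, i ≠ j → A i j ≤ 0)
    {f : κ → ι} (hf : Injective f) (hG : (A.submatrix f f).dynkinGraph.Preconnected)
    {x : ι → ℝ} (hx0 : x ≠ 0) (hx : x ⬝ᵥ (A.map (Int.cast : ℤ → ℝ) *ᵥ x) ≤ 0)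
    (hxf : x.support ⊂ Set.range f) : IndefiniteType (A.submatrix f f) := by
  refine ⟨fun hfin => hx.not_gt ((finiteType_submatrix_iff A hf).1 hfin x hx0 hxf.subset),
    fun haff => ?_⟩
  set M := (A.map (Int.cast : ℤ → ℝ)).submatrix f f
  have hM : ∀ i j, i ≠ j → M i j ≤ 0 := fun i j hij => by simpa [M] using hA _ _ (hf.ne hij)
  have hMG : M.dynkinGraph.Preconnected := by
    simp only [M, submatrix_map]
    rwa [dynkinGraph_map _ fun _ => Int.cast_eq_zero]
  have hxM : (x ∘ f) ⬝ᵥ (M *ᵥ (x ∘ f)) ≤ 0 := by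
    rwa [dotProduct_mulVec_submatrix_comp _ hf hxf.subset]
  obtain ⟨-, ⟨a, rfl⟩, ha⟩ := Set.exists_of_ssubset hxf
  exact apply_ne_zero_of_dotProduct_mulVec_nonpos hM hMG haff.1
    ((comp_eq_zero_iff_of_support_subset hxf.subset).not.2 hx0) hxM a (notMem_support.1 ha)

end CartanTypes

end Matrix

/-- an indecomposable, indefinite, non-hyperbolic Cartan matrix has a principal
submatrix of corank one (delete row and column `k`) that is indecomposable and indefinite. -/
theorem exists_indecomposable_indefinite_principal_submatrix {n : ℕ}
    (A : Matrix (Fin (n + 1)) (Fin (n + 1)) ℤ) (hA : IsCartanMatrix A)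
    (hind : Indecomposable A) (hidf : IndefiniteType A) (hnh : ¬Hyperbolic A) :
    ∃ k : Fin (n + 1),
      Indecomposable (A.submatrix k.succAbove k.succAbove) ∧
      IndefiniteType (A.submatrix k.succAbove k.succAbove) := by
  obtain ⟨S, -, hSu, hS⟩ : ∃ S : Finset (Fin (n + 1)), S.Nonempty ∧ S ≠ Finset.univ ∧
      IndefiniteType (A.submatrix (fun i : S => (i : Fin (n + 1))) (fun i : S => i)) := by
    simpa [Hyperbolic, IndefiniteType, hidf.1, hidf.2] using hnh
  obtain ⟨x, hx0, hxS, hx⟩ : ∃ x : Fin (n + 1) → ℝ, x ≠ 0 ∧ x.support ⊆ S ∧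
      x ⬝ᵥ (A.map (Int.cast : ℤ → ℝ) *ᵥ x) ≤ 0 := by
    simpa [finiteType_submatrix_iff A Subtype.val_injective] using hS.1
  obtain ⟨y, hy0, hyx, hy, hyG⟩ := exists_preconnected_support hx0 hx
  have hyS := hyx.trans hxS
  have hSu' : (S : Set (Fin (n + 1))) ≠ Set.univ := by simpa using hSu
  rw [dynkinGraph_map _ fun _ => Int.cast_eq_zero] at hyG
  obtain ⟨k, hky, hkG⟩ := ((indecomposable_iff_preconnected_dynkinGraph hA.2.2).1
    hind).exists_preconnected_induce_compl_singleton (support_nonempty_iff.2 hy0) hyG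
    fun h => hSu' (Set.eq_univ_of_univ_subset (h ▸ hyS))
  have hsucc := Fin.succAbove_right_injective (p := k)
  have hBG : (A.submatrix k.succAbove k.succAbove).dynkinGraph.Preconnected := by
    rw [dynkinGraph_submatrix _ hsucc, SimpleGraph.preconnected_comap_iff_induce_range hsucc,
      Fin.range_succAbove]
    exact hkG
  refine ⟨k, (indecomposable_iff_preconnected_dynkinGraph fun i j => hA.2.2 _ _).2 hBG, ?_⟩
  rcases (Set.subset_compl_singleton_iff.2 hky).eq_or_ssubset with h | h
  · refine (indefiniteType_submatrix_congr A hsucc Subtype.val_injective ?_).2 hS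
    rw [Fin.range_succAbove, Subtype.range_coe_subtype]
    exact (Set.eq_compl_singleton_of_compl_singleton_subset (h ▸ hyS) hSu').symm
  · exact indefiniteType_submatrix_of_support_ssubset A hA.2.1 hsucc hBG hy0 hy
      (Fin.range_succAbove k ▸ h)
end
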